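/- arXiv:1603.00411 — 4 statements merged into one kernel-verified Lean document; each statement's English description precedes it below -/
import Mathlib

section
/- Let ζ_j(n) = 3·∑_{i=0}^{⌊(n−1)/3⌋}(n−3i)^j for j ∈ {0,1,2}. Then ζ_2(2) − 3ζ_1(2) + 2ζ_0(2) = 0, and for every integer n ≥ 3, ζ_2(n) − 3ζ_1(n) + 2ζ_0(n) > 0. -/
/-- The auxiliary sums `ζ_j(n) = 3·∑_{i=0}^{⌊(n−1)/3⌋}(n−3i)^j`. -/
def zeta (j n : ℕ) : ℚ :=
  3 * ∑ i ∈ Finset.range ((n - 1) / 3 + 1), ((n : ℚ) - 3 * i) ^ j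

lemma term_nonneg (x : ℚ) (k : ℕ) (hk : x = k) : 0 ≤ (x - 1) * (x - 2) := by
  subst hk
  rcases k with _ | _ | k
  · norm_num
  · norm_num
  · push_cast
    nlinarith [Nat.cast_nonneg (α := ℚ) k]

/-- Positivity of `G_ℓ(n) = ζ₂(n) − 3ζ₁(n) + 2ζ₀(n)`: it vanishes at `n = 2`
and is positive for all `n ≥ 3`. -/
theorem G_ell_off_X (n : ℕ) :
    zeta 2 2 - 3 * zeta 1 2 + 2 * zeta 0 2 = 0 ∧
      (3 ≤ n → zeta 2 n - 3 * zeta 1 n + 2 * zeta 0 n > 0) := by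
  constructor
  · norm_num [zeta]
  · intro hn
    have key : zeta 2 n - 3 * zeta 1 n + 2 * zeta 0 n
        = 3 * ∑ i ∈ Finset.range ((n - 1) / 3 + 1),
            (((n : ℚ) - 3 * i) - 1) * (((n : ℚ) - 3 * i) - 2) := by
      simp only [zeta, Finset.mul_sum, ← Finset.sum_sub_distrib,
        ← Finset.sum_add_distrib]
      apply Finset.sum_congr rfl
      intro i _
      ring
    rw [key]
    have hpos : 0 < ∑ i ∈ Finset.range ((n - 1) / 3 + 1),
        (((n : ℚ) - 3 * i) - 1) * (((n : ℚ) - 3 * i) - 2) := by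
      apply Finset.sum_pos'
      · intro i hi
        simp only [Finset.mem_range, Nat.lt_succ_iff] at hi
        have h3i : 3 * i ≤ n := le_trans (by omega) (Nat.le_of_lt_succ (Nat.lt_succ_of_le (Nat.sub_le n 1)))
        have h3i : 3 * i ≤ n := by
          have := Nat.div_mul_le_self (n - 1) 3
          omega
        refine term_nonneg _ (n - 3 * i) ?_
        push_cast [Nat.cast_sub h3i]
        ring
      · refine ⟨0, Finset.mem_range.mpr (Nat.succ_pos _), ?_⟩
        have hn3 : (3 : ℚ) ≤ n := by exact_mod_cast hn
        push_cast
        nlinarith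
    linarith
end

section
/- Let ζ_j(n) = 3·∑_{i=0}^{⌊(n−1)/3⌋}(n−3i)^j for j ∈ {0,1,2}, and let {n/2} be the fractional part of n/2 (0 if n is even, 1/2 if n is odd). Then (3/4)ζ_2(2) − (5/2)ζ_1(2) + (2 − (1/2){2/2})ζ_0(2) ≥ 0, and for every integer n ≥ 3, (3/4)ζ_2(n) − (5/2)ζ_1(n) + (2 − (1/2){n/2})ζ_0(n) > 0. -/
/-- Fractional part of `n/2`: `0` if `n` is even, `1/2` if `n` is odd. -/
def halfFrac (n : ℕ) : ℚ := if n % 2 = 0 then 0 else 1/2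

lemma zeta_add_three (j n : ℕ) (hn : 1 ≤ n) :
    zeta j (n + 3) = 3 * ((n : ℚ) + 3) ^ j + zeta j n := by
  unfold zeta
  rw [show (n + 3 - 1) / 3 + 1 = ((n - 1) / 3 + 1) + 1 by omega,
    Finset.sum_range_succ']
  push_cast
  ring_nf

lemma halfFrac_cases (n : ℕ) : halfFrac n = 0 ∨ halfFrac n = 1/2 := by
  unfold halfFrac; split <;> simp

lemma main_pos : ∀ n : ℕ, 3 ≤ n →
    3/4 * zeta 2 n - 5/2 * zeta 1 n + (2 - 1/2 * halfFrac n) * zeta 0 n > 0 := by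
  intro n
  induction n using Nat.strong_induction_on with
  | _ n ih =>
    intro hn
    by_cases h : n ≤ 8
    · interval_cases n <;>
        norm_num [zeta, halfFrac, Finset.sum_range_succ]
    · push_neg at h
      obtain ⟨m, rfl⟩ : ∃ m, n = m + 6 := ⟨n - 6, by omega⟩
      have hm : 3 ≤ m := by omega
      have hm1 : 1 ≤ m := by omega
      have hm4 : 1 ≤ m + 3 := by omega
      have IH := ih m (by omega) hm
      have hhf : halfFrac (m + 6) = halfFrac m := by
        unfold halfFrac
        rw [show (m + 6) % 2 = m % 2 by omega]
      have e2 : zeta 2 (m + 6) = 3 * ((m : ℚ) + 6) ^ 2 + 3 * ((m : ℚ) + 3) ^ 2 + zeta 2 m := by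
        rw [show m + 6 = (m + 3) + 3 by ring, zeta_add_three 2 (m + 3) hm4,
          zeta_add_three 2 m hm1]; push_cast; ring
      have e1 : zeta 1 (m + 6) = 3 * ((m : ℚ) + 6) + 3 * ((m : ℚ) + 3) + zeta 1 m := by
        rw [show m + 6 = (m + 3) + 3 by ring, zeta_add_three 1 (m + 3) hm4,
          zeta_add_three 1 m hm1]; push_cast; ring
      have e0 : zeta 0 (m + 6) = 6 + zeta 0 m := by
        rw [show m + 6 = (m + 3) + 3 by ring, zeta_add_three 0 (m + 3) hm4,
          zeta_add_three 0 m hm1]; push_cast; ring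
      have hmq : (3 : ℚ) ≤ (m : ℚ) := by exact_mod_cast hm
      rw [e2, e1, e0, hhf]
      rcases halfFrac_cases m with hf | hf <;> rw [hf] at IH ⊢ <;> nlinarith [sq_nonneg ((m:ℚ))]

/-- Positivity of `G_ℓ(n) = (3/4)ζ₂(n) − (5/2)ζ₁(n) + (2 − (1/2){n/2})ζ₀(n)`:
nonnegative at `n = 2` and positive for `n ≥ 3`. -/
theorem G_ell_on_X (n : ℕ) :
    3/4 * zeta 2 2 - 5/2 * zeta 1 2 + (2 - 1/2 * halfFrac 2) * zeta 0 2 ≥ 0 ∧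
      (3 ≤ n →
        3/4 * zeta 2 n - 5/2 * zeta 1 n + (2 - 1/2 * halfFrac n) * zeta 0 n > 0) := by
  constructor
  · norm_num [zeta, halfFrac, Finset.sum_range_succ]
  · exact main_pos n
end

section
/- Let ζ_j(n) = 3·∑_{i=0}^{⌊(n−1)/3⌋}(n−3i)^j for j ∈ {0,1,2}, and let {n/2} be the fractional part of n/2 (0 if n is even, 1/2 if n is odd). Then (1/4)ζ_2(2) − (1 + (1/2){2/2})ζ_0(2) = 0, and for every integer n ≥ 3, (1/4)ζ_2(n) − (1 + (1/2){n/2})ζ_0(n) > 0. -/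
lemma sum_sq (x : ℚ) (k : ℕ) :
    ∑ i ∈ Finset.range (k + 1), (x - 3 * i) ^ 2 =
      (k + 1) * x ^ 2 - 3 * x * k * (k + 1) + (3/2) * k * (k + 1) * (2 * k + 1) := by
  induction k with
  | zero => simp
  | succ k ih =>
    rw [Finset.sum_range_succ, ih]
    push_cast
    ring

lemma sum_zero (x : ℚ) (k : ℕ) :
    ∑ i ∈ Finset.range (k + 1), (x - 3 * i) ^ 0 = (k + 1 : ℚ) := by
  simp

/-- Positivity of `G_ℓ(n) + G_m(n) = (1/4)ζ₂(n) − (1 + (1/2){n/2})ζ₀(n)`: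
zero at `n = 2` and positive for `n ≥ 3`. -/
theorem G_ell_plus_G_m (n : ℕ) :
    1/4 * zeta 2 2 - (1 + 1/2 * halfFrac 2) * zeta 0 2 = 0 ∧
      (3 ≤ n → 1/4 * zeta 2 n - (1 + 1/2 * halfFrac n) * zeta 0 n > 0) := by
  constructor
  · norm_num [zeta, halfFrac, Finset.sum_range_succ]
  · intro hn
    set k := (n - 1) / 3 with hkdef
    have hk1 : 3 * k + 1 ≤ n := by omega
    have hk2 : n ≤ 3 * k + 3 := by omega
    have hc : (1 + 1/2 * halfFrac n) ≤ 5/4 := by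
      unfold halfFrac; split <;> norm_num
    have hz2 : zeta 2 n = 3 * ((k + 1) * (n : ℚ) ^ 2 - 3 * n * k * (k + 1)
        + (3/2) * k * (k + 1) * (2 * k + 1)) := by
      rw [zeta, ← hkdef, sum_sq]
    have hz0 : zeta 0 n = 3 * ((k : ℚ) + 1) := by
      rw [zeta, ← hkdef, sum_zero]
    have hz0pos : (0 : ℚ) < 3 * ((k : ℚ) + 1) := by positivity
    have key : 1/4 * zeta 2 n - (5/4) * zeta 0 n > 0 := by
      rw [hz2, hz0]
      have hn' : (3 : ℚ) ≤ n := by exact_mod_cast hn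
      have h1 : (3 * (k : ℚ) + 1) ≤ n := by exact_mod_cast hk1
      have h2 : (n : ℚ) ≤ 3 * k + 3 := by exact_mod_cast hk2
      rcases Nat.eq_zero_or_pos k with hk0 | hkpos
      · have hn3 : n = 3 := by omega
        have hk0' : (k : ℚ) = 0 := by exact_mod_cast hk0
        have hn3' : (n : ℚ) = 3 := by exact_mod_cast hn3
        rw [hk0', hn3']
        norm_num
      · have hk1' : (1 : ℚ) ≤ k := by exact_mod_cast hkpos
        nlinarith [mul_nonneg (sub_nonneg.2 h1) (sub_nonneg.2 hn'),
          mul_nonneg (sub_nonneg.2 hk1') (sub_nonneg.2 h1),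
          sq_nonneg ((n : ℚ) - 3 * k), sq_nonneg ((k : ℚ))]
    have : (1 + 1/2 * halfFrac n) * zeta 0 n ≤ (5/4) * zeta 0 n := by
      rw [hz0]
      exact mul_le_mul_of_nonneg_right hc (le_of_lt hz0pos)
    linarith
end

section
/- Let ζ_j(n) = 3·∑_{i=0}^{⌊(n−1)/3⌋}(n−3i)^j for j ∈ {0,1,2}. Then for every integer n ≥ 2: if n ≡ 0 (mod 3) then ζ_2(n) + 3ζ_1(n) − 12ζ_0(n) > 0; if n ≡ 1 (mod 3) then ζ_2(n) + ζ_1(n) − 2ζ_0(n) > 0; and if n ≡ 2 (mod 3) then ζ_2(n) − ζ_1(n) + 4ζ_0(n) > 0. -/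
lemma zeta_step (j n : ℕ) (hn : 1 ≤ n) :
    zeta j (n + 3) = zeta j n + 3 * ((n : ℚ) + 3) ^ j := by
  unfold zeta
  have h : (n + 3 - 1) / 3 + 1 = ((n - 1) / 3 + 1) + 1 := by omega
  rw [h, Finset.sum_range_succ', mul_add]
  congr 1
  · refine congrArg _ (Finset.sum_congr rfl fun i _ => ?_)
    push_cast; ring
  · push_cast; ring

lemma case0 (m : ℕ) : zeta 2 (3*m+3) + 3 * zeta 1 (3*m+3) - 12 * zeta 0 (3*m+3) > 0 := by
  induction m with
  | zero =>
      simp only [zeta]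
      norm_num [Finset.sum_range_succ]
  | succ k ih =>
      have h : 3*(k+1)+3 = (3*k+3) + 3 := by ring
      rw [h, zeta_step 2 _ (by omega), zeta_step 1 _ (by omega), zeta_step 0 _ (by omega)]
      have : (0:ℚ) < ((3*k+3 : ℕ) : ℚ) := by positivity
      push_cast at this ⊢
      nlinarith [this, ih]

lemma case1 (m : ℕ) : zeta 2 (3*m+4) + zeta 1 (3*m+4) - 2 * zeta 0 (3*m+4) > 0 := by
  induction m with
  | zero =>
      simp only [zeta]
      norm_num [Finset.sum_range_succ]
  | succ k ih =>
      have h : 3*(k+1)+4 = (3*k+4) + 3 := by ring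
      rw [h, zeta_step 2 _ (by omega), zeta_step 1 _ (by omega), zeta_step 0 _ (by omega)]
      have : (0:ℚ) < ((3*k+4 : ℕ) : ℚ) := by positivity
      push_cast at this ⊢
      nlinarith [this, ih]

lemma case2 (m : ℕ) : zeta 2 (3*m+2) - zeta 1 (3*m+2) + 4 * zeta 0 (3*m+2) > 0 := by
  induction m with
  | zero =>
      simp only [zeta]
      norm_num [Finset.sum_range_succ]
  | succ k ih =>
      have h : 3*(k+1)+2 = (3*k+2) + 3 := by ring
      rw [h, zeta_step 2 _ (by omega), zeta_step 1 _ (by omega), zeta_step 0 _ (by omega)]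
      have : (0:ℚ) < ((3*k+2 : ℕ) : ℚ) := by positivity
      push_cast at this ⊢
      nlinarith [this, ih]

/-- Positivity of `6·G_ℓ(n)` in the linear-component case, subcase `ℓ > 0`,
according to the residue of `n` modulo 3. -/
theorem G_ell_linear_component (n : ℕ) (hn : 2 ≤ n) :
    (n % 3 = 0 → zeta 2 n + 3 * zeta 1 n - 12 * zeta 0 n > 0) ∧
    (n % 3 = 1 → zeta 2 n + zeta 1 n - 2 * zeta 0 n > 0) ∧
    (n % 3 = 2 → zeta 2 n - zeta 1 n + 4 * zeta 0 n > 0) := by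
  refine ⟨fun h => ?_, fun h => ?_, fun h => ?_⟩
  · obtain ⟨m, rfl⟩ : ∃ m, n = 3*m+3 := ⟨n/3 - 1, by omega⟩
    exact case0 m
  · obtain ⟨m, rfl⟩ : ∃ m, n = 3*m+4 := ⟨n/3 - 1, by omega⟩
    exact case1 m
  · obtain ⟨m, rfl⟩ : ∃ m, n = 3*m+2 := ⟨n/3, by omega⟩
    exact case2 m
end
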